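/- Let k ≥ 2 and σ_i = i(k−i)/2. For every η ∈ (0, 1/5] and A ≥ 0, the compact set K = ∏_{i=2}^{k} [−σ_{i−1} + η, A] ⊂ ℝ^{k−1} is stable under the flow of system (B): if b = (b_2,…,b_k) : [0,T) → ℝ^{k−1} is a C¹ solution of (B) with b_i(0) ∈ [−σ_{i−1} + η, A] for every i = 2,…,k, then b_i(τ) ∈ [−σ_{i−1} + η, A] for every τ ∈ [0,T) and every i = 2,…,k. In particular, any maximal solution of (B) with initial data in K is global (defined on [0,∞)). -/

import Mathlib

/-!
On a lower face `bᵢ = -σᵢ₋₁ + η` of the box, as long as every `bⱼ ≥ -σⱼ₋₁`, the equation gives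
`bᵢ' = η (bᵢ₋₁ - 2bᵢ + bᵢ₊₁) ≥ η (2σᵢ₋₁ - σᵢ₋₂ - σᵢ - 2η) = η (1 - 2η) > 0`, since `σ` has
second difference `-1`. On an upper face `bᵢ` is a maximum of the configuration and
`bᵢ + σᵢ₋₁ > 0`, so `bᵢ' ≤ 0`; raising the face to `A + ε t` makes this strict, and `ε → 0` at the
end. A first-exit-time argument turns these conditions on the faces into invariance of the box.

Since the box is bounded and the vector field is locally Lipschitz, Picard–Lindelöf gives solutions
on a common time interval from every point of the box; restarted shortly before `T`, such a solution
outlives `T` and, by uniqueness, extends the given one.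
-/

/-- `σᵢ = i(k-i)/2` (so that `σ₀ = σ_k = 0`). -/
noncomputable def sig (k i : ℕ) : ℝ := (i : ℝ) * ((k : ℝ) - (i : ℝ)) / 2

/-- System (B): `bᵢ' = (bᵢ + σᵢ₋₁)(bᵢ₋₁ - 2bᵢ + bᵢ₊₁)` for `i = 2,…,k`,
with the conventions `b₁ ≡ 0` and `b_{k+1} ≡ 0`, on the set `S`. -/
def SolvesB (k : ℕ) (b : ℕ → ℝ → ℝ) (S : Set ℝ) : Prop :=
  (∀ τ, b 1 τ = 0) ∧ (∀ τ, b (k + 1) τ = 0) ∧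
  ∀ i, 2 ≤ i → i ≤ k → ∀ τ ∈ S, HasDerivAt (b i)
    ((b i τ + sig k (i - 1)) * (b (i - 1) τ - 2 * b i τ + b (i + 1) τ)) τ

open Set Filter Topology Metric

theorem HasDerivAt.eventually_nonneg_nhdsGT {g : ℝ → ℝ} {g' x : ℝ} (hg : HasDerivAt g g' x)
    (hx : 0 ≤ g x) (hpos : g x = 0 → 0 < g') : ∀ᶠ t in 𝓝[>] x, 0 ≤ g t := by
  rcases hx.eq_or_lt with hx | hx
  · have hslope : ∀ᶠ t in 𝓝[>] x, 0 < slope g x t :=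
      ((hasDerivAt_iff_tendsto_slope.mp hg).mono_left (nhdsGT_le_nhdsNE x)).eventually
        (eventually_gt_nhds (hpos hx.symm))
    filter_upwards [hslope, self_mem_nhdsWithin] with t ht hxt
    rw [slope_def_field, ← hx, sub_zero] at ht
    exact ((div_pos_iff_of_pos_right (sub_pos.2 hxt)).1 ht).le
  · exact ((hg.continuousAt.eventually (lt_mem_nhds hx)).filter_mono nhdsWithin_le_nhds).mono
      fun _ h ↦ h.le

theorem nonneg_of_deriv_pos_of_eq_zero {ι : Type*} (s : Finset ι) {g g' : ι → ℝ → ℝ} {a b : ℝ}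
    (hg : ∀ i ∈ s, ∀ t ∈ Icc a b, HasDerivAt (g i) (g' i t) t)
    (ha : ∀ i ∈ s, 0 ≤ g i a)
    (hzero : ∀ t ∈ Ico a b, (∀ j ∈ s, 0 ≤ g j t) → ∀ i ∈ s, g i t = 0 → 0 < g' i t) :
    ∀ t ∈ Icc a b, ∀ i ∈ s, 0 ≤ g i t := by
  set S := {t | ∀ i ∈ s, 0 ≤ g i t}
  have hclosed : IsClosed (S ∩ Icc a b) := by
    have hS : S ∩ Icc a b = Icc a b ∩ ⋂ i ∈ s, {t ∈ Icc a b | 0 ≤ g i t} := by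
      ext t
      simp only [S, mem_inter_iff, mem_ofPred_eq, mem_iInter]
      exact ⟨fun h ↦ ⟨h.2, fun i hi ↦ ⟨h.2, h.1 i hi⟩⟩, fun h ↦ ⟨fun i hi ↦ (h.2 i hi).2, h.1⟩⟩
    rw [hS]
    exact isClosed_Icc.inter <| isClosed_biInter fun i hi ↦ isClosed_Icc.isClosed_le
      continuousOn_const fun t ht ↦ (hg i hi t ht).continuousAt.continuousWithinAt
  have hstep : ∀ x ∈ S ∩ Ico a b, S ∈ 𝓝[>] x := fun x ⟨hxS, hx⟩ ↦
    (eventually_all_finset s).2 fun i hi ↦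
      (hg i hi x (Ico_subset_Icc_self hx)).eventually_nonneg_nhdsGT (hxS i hi) (hzero x hx hxS i hi)
  exact fun t ht ↦ hclosed.Icc_subset_of_forall_mem_nhdsWithin ha hstep ht

section Extension

variable {E : Type*} [NormedAddCommGroup E] [NormedSpace ℝ E]

theorem mem_closedBall_of_hasDerivWithinAt {v : E → E} {α : ℝ → E} {x₀ : E} {t₀ h L r : ℝ}
    (hh : 0 < h) (hL : 0 ≤ L) (hLh : L * h < r) (hv : ∀ x ∈ closedBall x₀ r, ‖v x‖ ≤ L)
    (hα : ∀ t ∈ Icc t₀ (t₀ + h), HasDerivWithinAt α (v (α t)) (Icc t₀ (t₀ + h)) t)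
    (hα₀ : α t₀ = x₀) : ∀ t ∈ Icc t₀ (t₀ + h), α t ∈ closedBall x₀ r := by
  -- compare `‖α t - x₀‖` with the line of slope `r / h > L` that reaches `r` at time `t₀ + h`
  have hLc : L < r / h := (lt_div_iff₀ hh).2 hLh
  have hline : ∀ t ∈ Icc t₀ (t₀ + h), r / h * (t - t₀) ≤ r := fun t ht ↦
    (mul_le_mul_of_nonneg_left (by linarith [ht.2]) (hL.trans hLc.le)).trans_eq
      (div_mul_cancel₀ r hh.ne')
  have hle : ∀ t ∈ Icc t₀ (t₀ + h), ‖α t - x₀‖ ≤ r / h * (t - t₀) :=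
    image_norm_le_of_norm_deriv_right_lt_deriv_boundary (B' := fun _ ↦ r / h)
      (fun t ht ↦ ((hα t ht).sub_const x₀).continuousWithinAt)
      (fun t ht ↦ ((hα t (Ico_subset_Icc_self ht)).sub_const x₀).mono_of_mem_nhdsWithin
        (Icc_mem_nhdsGE_of_mem ht))
      (by simp [hα₀]) (fun t ↦ by simpa using ((hasDerivAt_id t).sub_const t₀).const_mul (r / h))
      fun t ht hcontact ↦ (hv _ <| by
        rw [mem_closedBall_iff_norm, hcontact]; exact hline t (Ico_subset_Icc_self ht)).trans_lt hLc
  exact fun t ht ↦ mem_closedBall_iff_norm.2 <| (hle t ht).trans (hline t ht)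

theorem hasDerivAt_of_eqOn_Iio_of_eqOn_Ioi {v : E → E} {f α g : ℝ → E} {a t₀ T T' : ℝ}
    (ht₀ : t₀ < T) (hf : ∀ t ∈ Ico a T, HasDerivAt f (v (f t)) t)
    (hα : ∀ t ∈ Ioo t₀ T', HasDerivAt α (v (α t)) t) (hgf : EqOn g f (Iio T))
    (hgα : EqOn g α (Ioi t₀)) : ∀ t ∈ Ico a T', HasDerivAt g (v (g t)) t := by
  intro t ht
  rcases lt_or_ge t T with htT | hTt
  · rw [hgf htT]
    exact (hf t ⟨ht.1, htT⟩).congr_of_eventuallyEq (eventually_of_mem (Iio_mem_nhds htT) hgf)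
  · have ht₀t : t₀ < t := ht₀.trans_le hTt
    rw [hgα ht₀t]
    exact (hα t ⟨ht₀t, ht.2⟩).congr_of_eventuallyEq (eventually_of_mem (Ioi_mem_nhds ht₀t) hgα)

variable [ProperSpace E] {v : E → E}

theorem LocallyLipschitz.exists_uniform_local_solution (hv : LocallyLipschitz v) (R : ℝ) :
    ∃ h > 0, ∀ x₀ ∈ closedBall (0 : E) R, ∀ t₀ : ℝ, ∃ α : ℝ → E, α t₀ = x₀ ∧
      ∀ t ∈ Icc t₀ (t₀ + h),
        HasDerivWithinAt α (v (α t)) (Icc t₀ (t₀ + h)) t ∧ α t ∈ closedBall 0 (R + 1) := by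
  obtain ⟨K, hK⟩ := hv.locallyLipschitzOn.exists_lipschitzOnWith_of_compact
    (isCompact_closedBall (0 : E) (R + 1))
  obtain ⟨C, hC⟩ := (isCompact_closedBall (0 : E) (R + 1)).exists_bound_of_continuousOn
    hv.continuous.continuousOn
  set L := C.toNNReal
  set h : ℝ := 1 / (L + 1)
  have hh : 0 < h := by positivity
  have hLh : (L : ℝ) * h < 1 := by
    rw [mul_one_div, div_lt_one (by positivity)]; linarith
  refine ⟨h, hh, fun x₀ hx₀ t₀ ↦ ?_⟩
  have hball : closedBall x₀ 1 ⊆ closedBall 0 (R + 1) :=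
    closedBall_subset_closedBall' (by rw [add_comm]; gcongr; exact hx₀)
  have hbound : ∀ x ∈ closedBall x₀ 1, ‖v x‖ ≤ L := fun x hx ↦
    (hC x (hball hx)).trans (Real.le_coe_toNNReal C)
  have hPL : IsPicardLindelof (fun _ ↦ v) (tmin := t₀) (tmax := t₀ + h)
      ⟨t₀, le_rfl, by linarith⟩ x₀ 1 0 L K :=
    .of_time_independent (by simpa using hbound) (by simpa using hK.mono hball) <| by
      show (L : ℝ) * max (t₀ + h - t₀) (t₀ - t₀) ≤ 1 - 0
      rw [add_sub_cancel_left, sub_self, max_eq_left hh.le, sub_zero]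
      exact hLh.le
  obtain ⟨α, hα₀, hα⟩ := hPL.exists_eq_forall_mem_Icc_hasDerivWithinAt₀
  exact ⟨α, hα₀, fun t ht ↦ ⟨hα t ht, hball <| mem_closedBall_of_hasDerivWithinAt
    hh L.2 hLh hbound hα hα₀ t ht⟩⟩

theorem LocallyLipschitz.exists_extension_of_norm_le (hv : LocallyLipschitz v) {f : ℝ → E}
    {a T R : ℝ} (haT : a < T) (hf : ∀ t ∈ Ico a T, HasDerivAt f (v (f t)) t)
    (hR : ∀ t ∈ Ico a T, ‖f t‖ ≤ R) :
    ∃ T' > T, ∃ g : ℝ → E, (∀ t ∈ Ico a T', HasDerivAt g (v (g t)) t) ∧ EqOn g f (Ico a T) := by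
  obtain ⟨h, hh, hsol⟩ := hv.exists_uniform_local_solution R
  obtain ⟨K, hK⟩ := hv.locallyLipschitzOn.exists_lipschitzOnWith_of_compact
    (isCompact_closedBall (0 : E) (R + 1))
  -- the common existence time `h` of solutions starting in the ball lets one restarted at `t₀`
  -- outlive `T`
  set t₀ := max a (T - h / 2)
  have ht₀ : t₀ ∈ Ico a T := ⟨le_max_left _ _, max_lt haT (by linarith)⟩
  have hTt₀ : T < t₀ + h := by linarith [le_max_right a (T - h / 2)]
  obtain ⟨α, hα₀, hα⟩ := hsol (f t₀) (mem_closedBall_zero_iff.2 (hR t₀ ht₀)) t₀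
  have hfα : ∀ τ ∈ Ico t₀ T, f τ = α τ := by
    intro τ hτ
    have hsub : Icc t₀ τ ⊆ Ico a T := fun t ht ↦ ⟨ht₀.1.trans ht.1, ht.2.trans_lt hτ.2⟩
    have hsubα : Icc t₀ τ ⊆ Icc t₀ (t₀ + h) := Icc_subset_Icc_right (by linarith [hτ.2])
    refine ODE_solution_unique_of_mem_Icc_right (v := fun _ ↦ v) (s := fun _ ↦ closedBall 0 (R + 1))
      (fun _ _ ↦ hK)
      (fun t ht ↦ (hf t (hsub ht)).continuousAt.continuousWithinAt)
      (fun t ht ↦ (hf t (hsub (Ico_subset_Icc_self ht))).hasDerivWithinAt)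
      (fun t ht ↦ mem_closedBall_zero_iff.2 ((hR t (hsub (Ico_subset_Icc_self ht))).trans
        (by linarith)))
      (fun t ht ↦ (hα t (hsubα ht)).1.continuousWithinAt.mono hsubα)
      (fun t ht ↦ (hα t (hsubα (Ico_subset_Icc_self ht))).1.mono_of_mem_nhdsWithin
        (Icc_mem_nhdsGE_of_mem ⟨ht.1, by linarith [ht.2, hτ.2]⟩))
      (fun t ht ↦ (hα t (hsubα (Ico_subset_Icc_self ht))).2) hα₀.symm ⟨hτ.1, le_rfl⟩
  set g : ℝ → E := fun t ↦ if t < t₀ then f t else α t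
  have hgf : EqOn g f (Iio T) := fun t ht ↦ by
    by_cases h₀ : t < t₀
    · simp [g, h₀]
    · simp only [g, h₀, if_false]
      exact (hfα t ⟨not_lt.1 h₀, ht⟩).symm
  have hgα : EqOn g α (Ioi t₀) := fun t ht ↦ if_neg (not_lt.2 (le_of_lt ht))
  exact ⟨t₀ + h, hTt₀, g, hasDerivAt_of_eqOn_Iio_of_eqOn_Ioi ht₀.2 hf
    (fun t ht ↦ (hα t (Ioo_subset_Icc_self ht)).1.hasDerivAt (Icc_mem_nhds ht.1 ht.2)) hgf hgα,
    fun t ht ↦ hgf ht.2⟩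

end Extension

theorem sig_le_sq {k i : ℕ} (h : i ≤ k) : sig k i ≤ k * k := by
  have : (i : ℝ) ≤ k := by exact_mod_cast h
  unfold sig; nlinarith

@[simp] theorem sig_zero (k : ℕ) : sig k 0 = 0 := by simp [sig]

@[simp] theorem sig_self (k : ℕ) : sig k k = 0 := by simp [sig]

theorem sig_sub_two_add_sig (k : ℕ) {i : ℕ} (hi : 2 ≤ i) :
    sig k (i - 2) + sig k i = 2 * sig k (i - 1) - 1 := by
  unfold sig
  rw [Nat.cast_sub hi, Nat.cast_sub (by omega : 1 ≤ i)]
  push_cast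
  ring

noncomputable def rhsB (k : ℕ) (c : ℕ → ℝ) (i : ℕ) : ℝ :=
  (c i + sig k (i - 1)) * (c (i - 1) - 2 * c i + c (i + 1))

theorem rhsB_congr {k i : ℕ} {c d : ℕ → ℝ} (h : ∀ n, i - 1 ≤ n → n ≤ i + 1 → c n = d n) :
    rhsB k c i = rhsB k d i := by
  unfold rhsB
  rw [h (i - 1) le_rfl (by omega), h i (by omega) (by omega), h (i + 1) (by omega) le_rfl]

theorem rhsB_pos_of_eq_neg_sig_add {k i : ℕ} {c : ℕ → ℝ} {η : ℝ} (hi : 2 ≤ i) (hη₀ : 0 < η)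
    (hη₁ : η < 1 / 2) (hc : c i = -sig k (i - 1) + η) (hprev : -sig k (i - 2) ≤ c (i - 1))
    (hnext : -sig k i ≤ c (i + 1)) : 0 < rhsB k c i := by
  have := sig_sub_two_add_sig k hi
  have hlap : 0 < c (i - 1) - 2 * c i + c (i + 1) := by linarith
  have hfactor : c i + sig k (i - 1) = η := by rw [hc]; ring
  unfold rhsB
  rw [hfactor]
  exact mul_pos hη₀ hlap

theorem rhsB_nonpos_of_neighbors_le {k i : ℕ} {c : ℕ → ℝ} (hc : 0 ≤ c i + sig k (i - 1))
    (hprev : c (i - 1) ≤ c i) (hnext : c (i + 1) ≤ c i) : rhsB k c i ≤ 0 :=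
  mul_nonpos_of_nonneg_of_nonpos hc (by linarith)

theorem Finset.forall_mem_disjSum {α β : Type*} {s : Finset α} {t : Finset β}
    {p : α ⊕ β → Prop} : (∀ x ∈ s.disjSum t, p x) ↔ (∀ a ∈ s, p (.inl a)) ∧ ∀ b ∈ t, p (.inr b) :=
  ⟨fun h ↦ ⟨fun a ha ↦ h _ (inl_mem_disjSum.2 ha), fun b hb ↦ h _ (inr_mem_disjSum.2 hb)⟩,
    fun h ↦ by
      rintro (a | b) hx
      exacts [h.1 a (inl_mem_disjSum.1 hx), h.2 b (inr_mem_disjSum.1 hx)]⟩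

theorem neg_sig_le_of_boundary_of_le {k n : ℕ} {c : ℕ → ℝ} {η : ℝ} (h1 : c 1 = 0)
    (hk : c (k + 1) = 0) (hη : 0 ≤ η) (hlow : ∀ i, 2 ≤ i ∧ i ≤ k → -sig k (i - 1) + η ≤ c i)
    (hn1 : 1 ≤ n) (hnk : n ≤ k + 1) : -sig k (n - 1) ≤ c n := by
  rcases (by omega : n = 1 ∨ n = k + 1 ∨ (2 ≤ n ∧ n ≤ k)) with rfl | rfl | hn
  · simp [h1]
  · simp [hk]
  · linarith [hlow n hn]

theorem le_of_boundary_of_le {k n : ℕ} {c : ℕ → ℝ} {M : ℝ} (h1 : c 1 = 0) (hk : c (k + 1) = 0)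
    (hM : 0 ≤ M) (hup : ∀ i, 2 ≤ i ∧ i ≤ k → c i ≤ M) (hn1 : 1 ≤ n) (hnk : n ≤ k + 1) :
    c n ≤ M := by
  rcases (by omega : n = 1 ∨ n = k + 1 ∨ (2 ≤ n ∧ n ≤ k)) with rfl | rfl | hn
  · simpa [h1] using hM
  · simpa [hk] using hM
  · exact hup n hn

theorem SolvesB.hasDerivAt {k i : ℕ} {b : ℕ → ℝ → ℝ} {S : Set ℝ} {τ : ℝ} (hb : SolvesB k b S)
    (hi : 2 ≤ i) (hik : i ≤ k) (hτ : τ ∈ S) : HasDerivAt (b i) (rhsB k (b · τ) i) τ :=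
  hb.2.2 i hi hik τ hτ

theorem SolvesB.bounds_with_slack {k : ℕ} {b : ℕ → ℝ → ℝ} {a T η A ε τ : ℝ}
    (hb : SolvesB k b (Ico a T)) (hη₀ : 0 < η) (hη₁ : η < 1 / 2) (hA : 0 ≤ A) (hε : 0 < ε)
    (h0 : ∀ i, 2 ≤ i → i ≤ k → b i a ∈ Icc (-sig k (i - 1) + η) A) (hτ : τ < T) :
    ∀ t ∈ Icc a τ, (∀ i, 2 ≤ i ∧ i ≤ k → -sig k (i - 1) + η ≤ b i t) ∧
      ∀ i, 2 ≤ i ∧ i ≤ k → b i t ≤ A + ε * (t - a) := by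
  have hslack (t : ℝ) : HasDerivAt (fun t ↦ A + ε * (t - a)) ε t := by
    simpa using (((hasDerivAt_id t).sub_const a).const_mul ε).const_add A
  -- `inl i` stands for the lower face of coordinate `i`, `inr i` for its raised upper face
  have key := nonneg_of_deriv_pos_of_eq_zero ((Finset.Icc 2 k).disjSum (Finset.Icc 2 k))
    (g := Sum.elim (fun i t ↦ b i t - (-sig k (i - 1) + η)) (fun i t ↦ A + ε * (t - a) - b i t))
    (g' := Sum.elim (fun i t ↦ rhsB k (b · t) i) (fun i t ↦ ε - rhsB k (b · t) i))
    (a := a) (b := τ)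
  simp only [Finset.forall_mem_disjSum, Sum.elim_inl, Sum.elim_inr, Finset.mem_Icc, sub_nonneg,
    sub_eq_zero, sub_pos] at key
  refine fun t ht ↦ key ⟨fun i hi t ht ↦ ?_, fun i hi t ht ↦ ?_⟩ ?_
    (fun t ht hall ↦ ⟨fun i hi hc ↦ ?_, fun i hi hc ↦ ?_⟩) t ht
  · exact (hb.hasDerivAt hi.1 hi.2 ⟨ht.1, ht.2.trans_lt hτ⟩).sub_const _
  · exact (hslack t).sub (hb.hasDerivAt hi.1 hi.2 ⟨ht.1, ht.2.trans_lt hτ⟩)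
  · exact ⟨fun i hi ↦ (h0 i hi.1 hi.2).1, fun i hi ↦ by linarith [(h0 i hi.1 hi.2).2]⟩
  · have hlow (n : ℕ) (hn1 : 1 ≤ n) (hnk : n ≤ k + 1) : -sig k (n - 1) ≤ b n t :=
      neg_sig_le_of_boundary_of_le (hb.1 t) (hb.2.1 t) hη₀.le hall.1 hn1 hnk
    refine rhsB_pos_of_eq_neg_sig_add hi.1 hη₀ hη₁ hc ?_
      (by simpa using hlow (i + 1) (by omega) (by omega))
    simpa [show i - 1 - 1 = i - 2 by omega] using hlow (i - 1) (by omega) (by omega)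
  · have hup (n : ℕ) (hn1 : 1 ≤ n) (hnk : n ≤ k + 1) : b n t ≤ A + ε * (t - a) :=
      le_of_boundary_of_le (hb.1 t) (hb.2.1 t) (by nlinarith [ht.1]) hall.2 hn1 hnk
    have hrhs := rhsB_nonpos_of_neighbors_le (k := k) (c := (b · t)) (i := i)
      (by linarith [hall.1 i hi]) (hc ▸ hup (i - 1) (by omega) (by omega))
      (hc ▸ hup (i + 1) (by omega) (by omega))
    linarith

theorem SolvesB.mem_Icc_of_mem_Icc {k : ℕ} {b : ℕ → ℝ → ℝ} {a T η A : ℝ}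
    (hb : SolvesB k b (Ico a T)) (hη₀ : 0 < η) (hη₁ : η < 1 / 2) (hA : 0 ≤ A)
    (h0 : ∀ i, 2 ≤ i → i ≤ k → b i a ∈ Icc (-sig k (i - 1) + η) A) :
    ∀ τ ∈ Ico a T, ∀ i, 2 ≤ i → i ≤ k → b i τ ∈ Icc (-sig k (i - 1) + η) A := by
  intro τ hτ i hi2 hik
  have hslack (ε : ℝ) (hε : 0 < ε) : -sig k (i - 1) + η ≤ b i τ ∧ b i τ ≤ A + ε * (τ - a) :=
    have h := hb.bounds_with_slack hη₀ hη₁ hA hε h0 hτ.2 τ ⟨hτ.1, le_rfl⟩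
    ⟨h.1 i ⟨hi2, hik⟩, h.2 i ⟨hi2, hik⟩⟩
  have hlim : Tendsto (fun ε : ℝ ↦ A + ε * (τ - a)) (𝓝[>] 0) (𝓝 A) := by
    have hcont : Continuous fun ε : ℝ ↦ A + ε * (τ - a) := by fun_prop
    simpa using (hcont.tendsto 0).mono_left nhdsWithin_le_nhds
  exact ⟨(hslack 1 one_pos).1,
    ge_of_tendsto hlim (eventually_nhdsWithin_of_forall fun ε hε ↦ (hslack ε hε).2)⟩

/- System (B) as an autonomous ODE on `Fin (k + 2) → ℝ`: only the coordinates `2, …, k` carry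
the unknowns, the other ones are kept at `0`. -/

def toState (k : ℕ) (c : ℕ → ℝ) : Fin (k + 2) → ℝ :=
  fun j ↦ if 2 ≤ (j : ℕ) ∧ (j : ℕ) ≤ k then c j else 0

def ofState (k : ℕ) (x : Fin (k + 2) → ℝ) (n : ℕ) : ℝ :=
  if h : 2 ≤ n ∧ n ≤ k then x ⟨n, by omega⟩ else 0

noncomputable def fieldB (k : ℕ) (x : Fin (k + 2) → ℝ) : Fin (k + 2) → ℝ :=
  toState k (rhsB k (ofState k x))

theorem ofState_toState {k : ℕ} {c : ℕ → ℝ} (h1 : c 1 = 0) (hk : c (k + 1) = 0) {n : ℕ}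
    (hn1 : 1 ≤ n) (hnk : n ≤ k + 1) : ofState k (toState k c) n = c n := by
  unfold ofState
  split_ifs with hn
  · simp [toState, hn]
  · rcases (by omega : n = 1 ∨ n = k + 1) with rfl | rfl
    exacts [h1.symm, hk.symm]

theorem norm_toState_le {k : ℕ} {c : ℕ → ℝ} {R : ℝ} (hR : 0 ≤ R)
    (h : ∀ i, 2 ≤ i → i ≤ k → |c i| ≤ R) : ‖toState k c‖ ≤ R := by
  refine (pi_norm_le_iff_of_nonneg hR).2 fun j ↦ ?_
  unfold toState
  split_ifs with hj
  exacts [h j hj.1 hj.2, by simpa using hR]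

theorem contDiff_fieldB (k : ℕ) : ContDiff ℝ 1 (fieldB k) := by
  have hcoord : ∀ n, ContDiff ℝ 1 fun x ↦ ofState k x n := fun n ↦ by
    unfold ofState
    split_ifs
    exacts [contDiff_apply ℝ ℝ _, contDiff_const]
  refine contDiff_pi.2 fun j ↦ ?_
  unfold fieldB toState rhsB
  split_ifs
  · exact ((hcoord _).add contDiff_const).mul
      (((hcoord _).sub (contDiff_const.mul (hcoord _))).add (hcoord _))
  · exact contDiff_const

theorem SolvesB.hasDerivAt_toState {k : ℕ} {b : ℕ → ℝ → ℝ} {S : Set ℝ} {τ : ℝ}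
    (hb : SolvesB k b S) (hτ : τ ∈ S) :
    HasDerivAt (fun t ↦ toState k (b · t)) (fieldB k (toState k (b · τ))) τ := by
  refine hasDerivAt_pi.2 fun j ↦ ?_
  by_cases hj : 2 ≤ (j : ℕ) ∧ (j : ℕ) ≤ k
  · have hfield : fieldB k (toState k (b · τ)) j = rhsB k (b · τ) j := by
      show (if 2 ≤ (j : ℕ) ∧ (j : ℕ) ≤ k then rhsB k (ofState k (toState k (b · τ))) j else 0) = _
      rw [if_pos hj]
      exact rhsB_congr fun n hn1 hn2 ↦ ofState_toState (hb.1 τ) (hb.2.1 τ) (by omega) (by omega)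
    rw [hfield]
    exact (hb.hasDerivAt hj.1 hj.2 hτ).congr_of_eventuallyEq (.of_forall fun t ↦ if_pos hj)
  · have hzero : ∀ x, toState k x j = 0 := fun x ↦ if_neg hj
    simp only [fieldB, hzero]
    exact hasDerivAt_const τ 0

theorem solvesB_of_hasDerivAt_fieldB {k : ℕ} {g : ℝ → Fin (k + 2) → ℝ} {c : ℕ → ℝ → ℝ}
    {S : Set ℝ} (hg : ∀ t ∈ S, HasDerivAt g (fieldB k (g t)) t) (h1 : ∀ t, c 1 t = 0)
    (hk : ∀ t, c (k + 1) t = 0) (hc : ∀ i, 2 ≤ i → i ≤ k → ∀ t, c i t = ofState k (g t) i) :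
    SolvesB k c S := by
  refine ⟨h1, hk, fun i hi2 hik t ht ↦ ?_⟩
  have hci : ∀ s, c i s = g s ⟨i, by omega⟩ := fun s ↦ by
    rw [hc i hi2 hik, ofState, dif_pos ⟨hi2, hik⟩]
  have hagree : ∀ n, 1 ≤ n → n ≤ k + 1 → ofState k (g t) n = c n t := by
    intro n hn1 hnk
    rcases (by omega : n = 1 ∨ n = k + 1 ∨ (2 ≤ n ∧ n ≤ k)) with rfl | rfl | hn
    · simp [ofState, h1]
    · simp [ofState, hk]
    · exact (hc n hn.1 hn.2 t).symm
  have hder := hasDerivAt_pi.1 (hg t ht) ⟨i, by omega⟩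
  simp only [fieldB, toState, if_pos (⟨hi2, hik⟩ : 2 ≤ i ∧ i ≤ k)] at hder
  rw [rhsB_congr fun n hn1 hn2 ↦ hagree n (by omega) (by omega)] at hder
  exact hder.congr_of_eventuallyEq (.of_forall hci)

theorem stmt8_general (k : ℕ) (η A : ℝ) (hη₀ : 0 < η) (hη₁ : η ≤ 1 / 5) (hA : 0 ≤ A) :
    (∀ (T : ℝ) (b : ℕ → ℝ → ℝ), SolvesB k b (Set.Ico 0 T) →
      (∀ i, 2 ≤ i → i ≤ k → b i 0 ∈ Set.Icc (-sig k (i - 1) + η) A) →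
      ∀ τ ∈ Set.Ico (0 : ℝ) T, ∀ i, 2 ≤ i → i ≤ k →
        b i τ ∈ Set.Icc (-sig k (i - 1) + η) A) ∧
    (∀ (T : ℝ), 0 < T → ∀ b : ℕ → ℝ → ℝ, SolvesB k b (Set.Ico 0 T) →
      (∀ i, 2 ≤ i → i ≤ k → b i 0 ∈ Set.Icc (-sig k (i - 1) + η) A) →
      ∃ T' > T, ∃ b' : ℕ → ℝ → ℝ, SolvesB k b' (Set.Ico 0 T') ∧
        ∀ i, ∀ τ ∈ Set.Ico (0 : ℝ) T, b' i τ = b i τ) := by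
  have hη : η < 1 / 2 := by linarith
  refine ⟨fun T b hb h0 ↦ hb.mem_Icc_of_mem_Icc hη₀ hη hA h0, fun T hT b hb h0 ↦ ?_⟩
  have hbox := hb.mem_Icc_of_mem_Icc hη₀ hη hA h0
  have hbound : ∀ t ∈ Ico 0 T, ‖toState k (b · t)‖ ≤ A + k * k := fun t ht ↦
    norm_toState_le (by positivity) fun i hi2 hik ↦ by
      have hσ := sig_le_sq (k := k) (i := i - 1) (by omega)
      have hkk : (0 : ℝ) ≤ k * k := by positivity
      have hbi := hbox t ht i hi2 hik
      exact abs_le.2 ⟨by linarith [hbi.1], by linarith [hbi.2]⟩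
  obtain ⟨T', hT', g, hg, hgb⟩ := (contDiff_fieldB k).locallyLipschitz.exists_extension_of_norm_le
    hT (fun t ht ↦ hb.hasDerivAt_toState ht) hbound
  -- at indices outside `2, …, k` keep `b`, so that `b'` agrees with `b` at every index
  refine ⟨T', hT', fun i t ↦ if 2 ≤ i ∧ i ≤ k then ofState k (g t) i else b i t,
    solvesB_of_hasDerivAt_fieldB hg (fun t ↦ by simp [hb.1 t]) (fun t ↦ by simp [hb.2.1 t])
      fun i hi2 hik t ↦ if_pos ⟨hi2, hik⟩, fun i τ hτ ↦ ?_⟩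
  dsimp only
  split_ifs with hi
  · rw [hgb hτ, ofState_toState (hb.1 τ) (hb.2.1 τ) (by omega) (by omega)]
  · rfl

/-- for `η ∈ (0,1/5]` and `A ≥ 0`, the compact
`∏_{i=2}^k [-σᵢ₋₁ + η, A]` is stable under the flow of system (B): any solution on `[0,T)`
starting in it stays in it.  In particular a maximal solution with initial data in this
compact is global: any solution on a finite interval `[0,T)` with initial data in the
compact extends to a solution on a strictly larger interval `[0,T')`. -/
theorem stmt8 (k : ℕ) (hk : 2 ≤ k) (η A : ℝ) (hη₀ : 0 < η) (hη₁ : η ≤ 1 / 5) (hA : 0 ≤ A) :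
    (∀ (T : ℝ) (b : ℕ → ℝ → ℝ), SolvesB k b (Set.Ico 0 T) →
      (∀ i, 2 ≤ i → i ≤ k → b i 0 ∈ Set.Icc (-sig k (i - 1) + η) A) →
      ∀ τ ∈ Set.Ico (0 : ℝ) T, ∀ i, 2 ≤ i → i ≤ k →
        b i τ ∈ Set.Icc (-sig k (i - 1) + η) A) ∧
    (∀ (T : ℝ), 0 < T → ∀ b : ℕ → ℝ → ℝ, SolvesB k b (Set.Ico 0 T) →
      (∀ i, 2 ≤ i → i ≤ k → b i 0 ∈ Set.Icc (-sig k (i - 1) + η) A) →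
      ∃ T' > T, ∃ b' : ℕ → ℝ → ℝ, SolvesB k b' (Set.Ico 0 T') ∧
        ∀ i, ∀ τ ∈ Set.Ico (0 : ℝ) T, b' i τ = b i τ) :=
  stmt8_general k η A hη₀ hη₁ hA
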